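/- Let L>0, Ω=(0,L)×(-1,1), and κ>0. Let w=(w₁,w₂) be a smooth Ω-periodic, divergence-free, symmetric vector field, and let θ and ξ be smooth Ω-periodic scalar functions. Then |∫_Ω ((w·∇)θ)(x) ξ(x) dx| ≤ (κ/20)‖∇ξ‖² + (5/κ)‖θ‖_{L^∞}² (‖w₁‖² + ‖∇w₁‖²), where ‖θ‖_{L^∞} is the supremum of |θ| on Ω. -/

import Mathlib

open MeasureTheory Real Filter

noncomputable section

/-- First partial derivative. -/
def d1 (f : ℝ × ℝ → ℝ) (p : ℝ × ℝ) : ℝ := fderiv ℝ f p (1, 0)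

/-- Second partial derivative. -/
def d2 (f : ℝ × ℝ → ℝ) (p : ℝ × ℝ) : ℝ := fderiv ℝ f p (0, 1)

/-- Laplacian. -/
def lap (f : ℝ × ℝ → ℝ) (p : ℝ × ℝ) : ℝ := d1 (d1 f) p + d2 (d2 f) p

/-- The domain Ω = (0,L) × (-1,1). -/
def Omg (L : ℝ) : Set (ℝ × ℝ) := Set.Ioo 0 L ×ˢ Set.Ioo (-1) 1

/-- Squared L² norm over Ω. -/
def nrmSq (L : ℝ) (f : ℝ × ℝ → ℝ) : ℝ := ∫ p in Omg L, (f p) ^ 2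

/-- L² norm over Ω. -/
def nrm (L : ℝ) (f : ℝ × ℝ → ℝ) : ℝ := Real.sqrt (nrmSq L f)

/-- Squared L² norm of the gradient over Ω. -/
def gradNrmSq (L : ℝ) (f : ℝ × ℝ → ℝ) : ℝ := ∫ p in Omg L, ((d1 f p) ^ 2 + (d2 f p) ^ 2)

/-- L² norm of the gradient over Ω. -/
def gradNrm (L : ℝ) (f : ℝ × ℝ → ℝ) : ℝ := Real.sqrt (gradNrmSq L f)

/-- Squared L² norm of the Laplacian over Ω. -/
def lapNrmSq (L : ℝ) (f : ℝ × ℝ → ℝ) : ℝ := ∫ p in Omg L, (lap f p) ^ 2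

/-- L² norm of the Laplacian over Ω. -/
def lapNrm (L : ℝ) (f : ℝ × ℝ → ℝ) : ℝ := Real.sqrt (lapNrmSq L f)

/-- Ω-periodic: L-periodic in x₁ and 2-periodic in x₂. -/
def OmgPeriodic (L : ℝ) (f : ℝ × ℝ → ℝ) : Prop :=
  (∀ x y : ℝ, f (x + L, y) = f (x, y)) ∧ (∀ x y : ℝ, f (x, y + 2) = f (x, y))

/-- Divergence-free vector field. -/
def DivFree (u₁ u₂ : ℝ × ℝ → ℝ) : Prop := ∀ p, d1 u₁ p + d2 u₂ p = 0

/-- Symmetric vector field: first component even in x₂, second odd in x₂. -/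
def Symm (u₁ u₂ : ℝ × ℝ → ℝ) : Prop :=
  (∀ x y : ℝ, u₁ (x, -y) = u₁ (x, y)) ∧ (∀ x y : ℝ, u₂ (x, -y) = -u₂ (x, y))



/-!
Integrating by parts moves the derivative from `θ` to `ξ`: since `w` is divergence free,
`∂₁(w₁θξ) + ∂₂(w₂θξ) = ((w·∇)θ)ξ + ((w·∇)ξ)θ`, and the left side integrates to zero by
periodicity. Then `|((w·∇)ξ)θ| ≤ ‖θ‖_∞ |w| |∇ξ|` and Young's inequality give the bound with
`‖w₁‖² + ‖w₂‖²` in place of `‖w₁‖² + ‖∇w₁‖²`. Finally, symmetry forces `w₂ = 0` on `x₂ = 0`, so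
`w₂(x₁, x₂) = -∫₀^{x₂} ∂₁w₁(x₁, t) dt`; Cauchy–Schwarz gives `w₂² ≤ |x₂| ∫_{-1}^{1} (∂₁w₁)²`,
and `∫_{-1}^{1} |x₂| dx₂ = 1` yields `‖w₂‖ ≤ ‖∂₁w₁‖`.
-/

open Set

section PartialDerivatives

variable {f g : ℝ × ℝ → ℝ}

lemma hasDerivAt_d1 {x y : ℝ} (hf : DifferentiableAt ℝ f (x, y)) :
    HasDerivAt (fun t => f (t, y)) (d1 f (x, y)) x :=
  hf.hasFDerivAt.comp_hasDerivAt x (by simpa using (hasDerivAt_id x).prodMk (hasDerivAt_const x y))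

lemma hasDerivAt_d2 {x y : ℝ} (hf : DifferentiableAt ℝ f (x, y)) :
    HasDerivAt (fun t => f (x, t)) (d2 f (x, y)) y :=
  hf.hasFDerivAt.comp_hasDerivAt y (by simpa using (hasDerivAt_const y x).prodMk (hasDerivAt_id y))

lemma continuous_d1 (hf : ContDiff ℝ 1 f) : Continuous (d1 f) :=
  (hf.continuous_fderiv one_ne_zero).clm_apply continuous_const

lemma continuous_d2 (hf : ContDiff ℝ 1 f) : Continuous (d2 f) :=
  (hf.continuous_fderiv one_ne_zero).clm_apply continuous_const

lemma d1_mul {p : ℝ × ℝ} (hf : DifferentiableAt ℝ f p) (hg : DifferentiableAt ℝ g p) :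
    d1 (fun q => f q * g q) p = d1 f p * g p + f p * d1 g p := by
  simp only [d1, fderiv_fun_mul hf hg, add_apply, smul_apply, smul_eq_mul]
  ring

lemma d2_mul {p : ℝ × ℝ} (hf : DifferentiableAt ℝ f p) (hg : DifferentiableAt ℝ g p) :
    d2 (fun q => f q * g q) p = d2 f p * g p + f p * d2 g p := by
  simp only [d2, fderiv_fun_mul hf hg, add_apply, smul_apply, smul_eq_mul]
  ring

end PartialDerivatives

section IntegralsOverOmg

variable {L : ℝ} {f : ℝ × ℝ → ℝ}

lemma measurableSet_Omg : MeasurableSet (Omg L) := measurableSet_Ioo.prod measurableSet_Ioo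

lemma Continuous.integrableOn_Omg (hf : Continuous f) : IntegrableOn f (Omg L) :=
  (hf.continuousOn.integrableOn_compact (isCompact_Icc.prod isCompact_Icc)).mono_set
    (prod_mono Ioo_subset_Icc_self Ioo_subset_Icc_self)

lemma integrable_prod_restrict_Omg (hf : Continuous f) :
    Integrable f (((volume : Measure ℝ).restrict (Ioo 0 L)).prod
      ((volume : Measure ℝ).restrict (Ioo (-1) 1))) := by
  rw [Measure.prod_restrict, ← Measure.volume_eq_prod]
  exact hf.integrableOn_Omg

lemma integral_Omg_eq_iterated (hf : Continuous f) :
    ∫ p in Omg L, f p = ∫ x in Ioo 0 L, ∫ y in Ioo (-1 : ℝ) 1, f (x, y) := by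
  rw [Omg, Measure.volume_eq_prod, ← Measure.prod_restrict]
  exact integral_prod f (integrable_prod_restrict_Omg hf)

lemma integral_Omg_eq_iterated_swap (hf : Continuous f) :
    ∫ p in Omg L, f p = ∫ y in Ioo (-1 : ℝ) 1, ∫ x in Ioo 0 L, f (x, y) := by
  rw [Omg, Measure.volume_eq_prod, ← Measure.prod_restrict]
  exact integral_prod_symm f (integrable_prod_restrict_Omg hf)

lemma abs_le_sSup_image_Omg (hf : Continuous f) {p : ℝ × ℝ} (hp : p ∈ Omg L) :
    |f p| ≤ sSup ((fun q => |f q|) '' Omg L) := by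
  have hbdd : BddAbove ((fun q => |f q|) '' (Icc 0 L ×ˢ Icc (-1 : ℝ) 1)) :=
    ((isCompact_Icc.prod isCompact_Icc).image hf.abs).bddAbove
  exact le_csSup (hbdd.mono (image_mono (prod_mono Ioo_subset_Icc_self Ioo_subset_Icc_self)))
    (mem_image_of_mem _ hp)

lemma nrmSq_d1_le_gradNrmSq (hf : ContDiff ℝ 1 f) : nrmSq L (d1 f) ≤ gradNrmSq L f :=
  setIntegral_mono_on ((continuous_d1 hf).pow 2).integrableOn_Omg
    (((continuous_d1 hf).pow 2).add ((continuous_d2 hf).pow 2)).integrableOn_Omg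
    measurableSet_Omg fun _ _ => le_add_of_nonneg_right (sq_nonneg _)

end IntegralsOverOmg

section Divergence

lemma setIntegral_Ioo_deriv_eq_zero {g g' : ℝ → ℝ} {a b : ℝ} (hab : a ≤ b)
    (hg : ∀ t, HasDerivAt g (g' t) t) (hg' : Continuous g') (hgab : g b = g a) :
    ∫ t in Ioo a b, g' t = 0 := by
  rw [← integral_Ioc_eq_integral_Ioo, ← intervalIntegral.integral_of_le hab,
    intervalIntegral.integral_eq_sub_of_hasDerivAt (fun t _ => hg t) (hg'.intervalIntegrable a b),
    hgab, sub_self]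

variable {L : ℝ} {F₁ F₂ : ℝ × ℝ → ℝ}

lemma integral_d1_eq_zero (hL : 0 ≤ L) (hF : ContDiff ℝ 1 F₁)
    (hper : ∀ x y, F₁ (x + L, y) = F₁ (x, y)) : ∫ p in Omg L, d1 F₁ p = 0 := by
  rw [integral_Omg_eq_iterated_swap (continuous_d1 hF)]
  refine integral_eq_zero_of_ae <| .of_forall fun y => setIntegral_Ioo_deriv_eq_zero hL
    (fun x => hasDerivAt_d1 (hF.differentiable one_ne_zero _))
    ((continuous_d1 hF).comp (continuous_id.prodMk continuous_const)) ?_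
  simpa using hper 0 y

lemma integral_d2_eq_zero (hF : ContDiff ℝ 1 F₂)
    (hper : ∀ x y, F₂ (x, y + 2) = F₂ (x, y)) : ∫ p in Omg L, d2 F₂ p = 0 := by
  rw [integral_Omg_eq_iterated (continuous_d2 hF)]
  refine integral_eq_zero_of_ae <| .of_forall fun x => setIntegral_Ioo_deriv_eq_zero (by norm_num)
    (fun y => hasDerivAt_d2 (hF.differentiable one_ne_zero _))
    ((continuous_d2 hF).comp (continuous_const.prodMk continuous_id)) ?_
  simpa [show (-1 : ℝ) + 2 = 1 by norm_num] using hper x (-1)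

lemma integral_d1_add_d2_eq_zero (hL : 0 ≤ L) (hF₁ : ContDiff ℝ 1 F₁) (hF₂ : ContDiff ℝ 1 F₂)
    (hper₁ : ∀ x y, F₁ (x + L, y) = F₁ (x, y)) (hper₂ : ∀ x y, F₂ (x, y + 2) = F₂ (x, y)) :
    ∫ p in Omg L, (d1 F₁ p + d2 F₂ p) = 0 := by
  rw [integral_add (continuous_d1 hF₁).integrableOn_Omg (continuous_d2 hF₂).integrableOn_Omg,
    integral_d1_eq_zero hL hF₁ hper₁, integral_d2_eq_zero hF₂ hper₂, add_zero]

end Divergence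

section Advection

/-- The transport term `(u·∇)f`. -/
def advection (u₁ u₂ f : ℝ × ℝ → ℝ) (p : ℝ × ℝ) : ℝ := u₁ p * d1 f p + u₂ p * d2 f p

variable {L : ℝ} {w₁ w₂ θ ξ : ℝ × ℝ → ℝ}

lemma continuous_advection (hw₁ : Continuous w₁) (hw₂ : Continuous w₂) (hθ : ContDiff ℝ 1 θ) :
    Continuous (advection w₁ w₂ θ) :=
  (hw₁.mul (continuous_d1 hθ)).add (hw₂.mul (continuous_d2 hθ))

lemma d1_add_d2_mul_mul_of_divFree (hw₁ : ContDiff ℝ 1 w₁) (hw₂ : ContDiff ℝ 1 w₂)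
    (hθ : ContDiff ℝ 1 θ) (hξ : ContDiff ℝ 1 ξ) (hdiv : DivFree w₁ w₂) (p : ℝ × ℝ) :
    d1 (fun q => w₁ q * (θ q * ξ q)) p + d2 (fun q => w₂ q * (θ q * ξ q)) p
      = advection w₁ w₂ θ p * ξ p + advection w₁ w₂ ξ p * θ p := by
  have hd : ∀ {f : ℝ × ℝ → ℝ}, ContDiff ℝ 1 f → DifferentiableAt ℝ f p :=
    fun hf => hf.differentiable one_ne_zero p
  rw [d1_mul (hd hw₁) (hd (hθ.mul hξ)), d2_mul (hd hw₂) (hd (hθ.mul hξ)),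
    d1_mul (hd hθ) (hd hξ), d2_mul (hd hθ) (hd hξ), advection, advection]
  linear_combination (θ p * ξ p) * hdiv p

lemma integral_advection_mul_eq_neg (hL : 0 ≤ L) (hw₁ : ContDiff ℝ 1 w₁)
    (hw₂ : ContDiff ℝ 1 w₂) (hθ : ContDiff ℝ 1 θ) (hξ : ContDiff ℝ 1 ξ)
    (hpw₁ : OmgPeriodic L w₁) (hpw₂ : OmgPeriodic L w₂) (hpθ : OmgPeriodic L θ)
    (hpξ : OmgPeriodic L ξ) (hdiv : DivFree w₁ w₂) :
    ∫ p in Omg L, advection w₁ w₂ θ p * ξ p = -∫ p in Omg L, advection w₁ w₂ ξ p * θ p := by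
  have hzero := integral_d1_add_d2_eq_zero hL (hw₁.mul (hθ.mul hξ)) (hw₂.mul (hθ.mul hξ))
    (fun x y => by simp only [hpw₁.1, hpθ.1, hpξ.1])
    (fun x y => by simp only [hpw₂.2, hpθ.2, hpξ.2])
  simp_rw [d1_add_d2_mul_mul_of_divFree hw₁ hw₂ hθ hξ hdiv] at hzero
  rw [integral_add
    ((continuous_advection hw₁.continuous hw₂.continuous hθ).fun_mul hξ.continuous).integrableOn_Omg
    ((continuous_advection hw₁.continuous hw₂.continuous hξ).fun_mul hθ.continuous).integrableOn_Omg]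
    at hzero
  exact eq_neg_of_add_eq_zero_left hzero

lemma abs_mul_add_mul_mul_le {κ M u₁ u₂ a b t : ℝ} (hκ : 0 < κ) (ht : |t| ≤ M) :
    |(u₁ * a + u₂ * b) * t| ≤ κ / 20 * (a ^ 2 + b ^ 2) + 5 / κ * M ^ 2 * (u₁ ^ 2 + u₂ ^ 2) := by
  -- AM-GM, with weights `κ / 20` and `5 / κ` of product `1 / 4`
  have young : ∀ u c : ℝ, |u| * |c| * M ≤ κ / 20 * c ^ 2 + 5 / κ * M ^ 2 * u ^ 2 := by
    intro u c
    have hsq : κ / 20 * c ^ 2 + 5 / κ * M ^ 2 * u ^ 2 - |u| * |c| * M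
        = (κ * |c| - 10 * M * |u|) ^ 2 / (20 * κ) := by
      rw [← sq_abs c, ← sq_abs u]
      field_simp
      ring
    rw [← sub_nonneg, hsq]
    positivity
  calc |(u₁ * a + u₂ * b) * t| ≤ (|u₁| * |a| + |u₂| * |b|) * M := by
        rw [abs_mul]
        exact mul_le_mul ((abs_add_le _ _).trans_eq (by rw [abs_mul, abs_mul])) ht
          (abs_nonneg _) (by positivity)
    _ ≤ _ := by nlinarith [young u₁ a, young u₂ b]

lemma abs_integral_advection_mul_le {L κ : ℝ} (hκ : 0 < κ) (hw₁ : Continuous w₁)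
    (hw₂ : Continuous w₂) (hθ : Continuous θ) (hξ : ContDiff ℝ 1 ξ) :
    |∫ p in Omg L, advection w₁ w₂ ξ p * θ p| ≤ κ / 20 * gradNrmSq L ξ
      + 5 / κ * (sSup ((fun p => |θ p|) '' Omg L)) ^ 2 * (nrmSq L w₁ + nrmSq L w₂) := by
  set M := sSup ((fun p => |θ p|) '' Omg L)
  have hd1ξ := continuous_d1 hξ
  have hd2ξ := continuous_d2 hξ
  calc |∫ p in Omg L, advection w₁ w₂ ξ p * θ p|
      ≤ ∫ p in Omg L, (κ / 20 * (d1 ξ p ^ 2 + d2 ξ p ^ 2)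
          + 5 / κ * M ^ 2 * (w₁ p ^ 2 + w₂ p ^ 2)) :=
        abs_integral_le_integral_abs.trans <| setIntegral_mono_on
          ((continuous_advection hw₁ hw₂ hξ).fun_mul hθ).abs.integrableOn_Omg
          (Continuous.integrableOn_Omg (by fun_prop)) measurableSet_Omg
          fun p hp => abs_mul_add_mul_mul_le hκ (abs_le_sSup_image_Omg hθ hp)
    _ = κ / 20 * gradNrmSq L ξ + 5 / κ * M ^ 2 * (nrmSq L w₁ + nrmSq L w₂) := by
        rw [integral_add (Continuous.integrableOn_Omg (by fun_prop))
            (Continuous.integrableOn_Omg (by fun_prop)), integral_const_mul, integral_const_mul,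
          integral_add (f := fun p => w₁ p ^ 2) (Continuous.integrableOn_Omg (by fun_prop))
            (Continuous.integrableOn_Omg (by fun_prop))]
        rfl

end Advection

section Poincare

lemma sq_integral_le_measureReal_mul_integral_sq {α : Type*} [MeasurableSpace α]
    {μ : Measure α} [IsFiniteMeasure μ] {f : α → ℝ} (hf : Integrable f μ)
    (hf2 : Integrable (fun x => f x ^ 2) μ) :
    (∫ x, f x ∂μ) ^ 2 ≤ μ.real univ * ∫ x, f x ^ 2 ∂μ := by
  have hquad : ∀ s : ℝ,
      0 ≤ μ.real univ * (s * s) + 2 * (∫ x, f x ∂μ) * s + ∫ x, f x ^ 2 ∂μ := by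
    intro s
    have hexpand : ∫ x, (s + f x) ^ 2 ∂μ
        = μ.real univ * (s * s) + 2 * (∫ x, f x ∂μ) * s + ∫ x, f x ^ 2 ∂μ := by
      simp_rw [add_sq]
      rw [integral_add ((integrable_const _).fun_add (hf.const_mul (2 * s))) hf2,
        integral_add (integrable_const _) (hf.const_mul (2 * s)), integral_const,
        integral_const_mul, smul_eq_mul]
      ring
    exact hexpand ▸ integral_nonneg fun _ => sq_nonneg _
  have := discrim_le_zero hquad
  rw [discrim] at this
  linarith

lemma integral_abs_Ioo_neg_one_one : ∫ y in Ioo (-1 : ℝ) 1, |y| = 1 := by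
  rw [← integral_Ioc_eq_integral_Ioo, ← intervalIntegral.integral_of_le (by norm_num),
    ← intervalIntegral.integral_add_adjacent_intervals (b := 0)
      (continuous_abs.intervalIntegrable _ _) (continuous_abs.intervalIntegrable _ _),
    intervalIntegral.integral_congr (g := fun y : ℝ => -y)
      (fun y hy => abs_of_nonpos (by simp at hy; exact hy.2)),
    intervalIntegral.integral_congr (g := fun y : ℝ => y)
      (fun y hy => abs_of_nonneg (by simp at hy; exact hy.1))]
  rw [intervalIntegral.integral_neg]
  norm_num

lemma sq_intervalIntegral_le {f : ℝ → ℝ} (hf : Continuous f) (a b : ℝ) :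
    (∫ t in a..b, f t) ^ 2 ≤ |b - a| * ∫ t in uIoc a b, f t ^ 2 := by
  have : IsFiniteMeasure (volume.restrict (uIoc a b)) := isFiniteMeasure_restrict.2 (by simp)
  have hcs := sq_integral_le_measureReal_mul_integral_sq (μ := volume.restrict (uIoc a b))
    hf.integrableOn_uIoc (hf.pow 2).integrableOn_uIoc
  rwa [measureReal_restrict_apply_univ, measureReal_def, Real.volume_uIoc,
    ENNReal.toReal_ofReal (abs_nonneg _), ← sq_abs,
    ← intervalIntegral.abs_integral_eq_abs_integral_uIoc, sq_abs] at hcs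

lemma integral_sq_le_integral_sq_deriv_of_eq_zero {g g' : ℝ → ℝ} (hg : ∀ t, HasDerivAt g (g' t) t)
    (hg' : Continuous g') (h0 : g 0 = 0) :
    ∫ y in Ioo (-1 : ℝ) 1, g y ^ 2 ≤ ∫ y in Ioo (-1 : ℝ) 1, g' y ^ 2 := by
  set C := ∫ y in Ioo (-1 : ℝ) 1, g' y ^ 2 with hC
  have hpt : ∀ y ∈ Ioo (-1 : ℝ) 1, g y ^ 2 ≤ |y| * C := by
    intro y hy
    have hftc : g y = ∫ t in 0..y, g' t := by
      rw [intervalIntegral.integral_eq_sub_of_hasDerivAt (fun t _ => hg t)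
        (hg'.intervalIntegrable 0 y), h0, sub_zero]
    have hsub : uIoc 0 y ⊆ Ioc (-1) 1 :=
      Ioc_subset_Ioc (le_min (by norm_num) hy.1.le) (max_le (by norm_num) hy.2.le)
    calc g y ^ 2 ≤ |y - 0| * ∫ t in uIoc 0 y, g' t ^ 2 := hftc ▸ sq_intervalIntegral_le hg' 0 y
      _ ≤ |y| * C := by
          rw [sub_zero, hC, ← integral_Ioc_eq_integral_Ioo]
          exact mul_le_mul_of_nonneg_left (setIntegral_mono_set
            ((hg'.pow 2).integrableOn_Icc.mono_set Ioc_subset_Icc_self)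
            (.of_forall fun _ => sq_nonneg _) hsub.eventuallyLE) (abs_nonneg y)
  have hgc : Continuous g := continuous_iff_continuousAt.2 fun t => (hg t).continuousAt
  calc ∫ y in Ioo (-1 : ℝ) 1, g y ^ 2 ≤ ∫ y in Ioo (-1 : ℝ) 1, |y| * C :=
        setIntegral_mono_on ((hgc.pow 2).integrableOn_Icc.mono_set Ioo_subset_Icc_self)
          ((continuous_abs.mul continuous_const).integrableOn_Icc.mono_set Ioo_subset_Icc_self)
          measurableSet_Ioo hpt
    _ = C := by rw [integral_mul_const, integral_abs_Ioo_neg_one_one, one_mul]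

end Poincare

lemma nrmSq_le_nrmSq_d1_of_divFree {L : ℝ} {w₁ w₂ : ℝ × ℝ → ℝ} (hw₁ : ContDiff ℝ 1 w₁)
    (hw₂ : ContDiff ℝ 1 w₂) (hdiv : DivFree w₁ w₂) (h0 : ∀ x, w₂ (x, 0) = 0) :
    nrmSq L w₂ ≤ nrmSq L (d1 w₁) := by
  rw [nrmSq, nrmSq, integral_Omg_eq_iterated (hw₂.continuous.fun_pow 2),
    integral_Omg_eq_iterated ((continuous_d1 hw₁).fun_pow 2)]
  refine integral_mono_of_nonneg
    (.of_forall fun x => setIntegral_nonneg measurableSet_Ioo fun _ _ => sq_nonneg _)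
    (integrable_prod_restrict_Omg ((continuous_d1 hw₁).pow 2)).integral_prod_left
    (.of_forall fun x => ?_)
  have hslice := integral_sq_le_integral_sq_deriv_of_eq_zero
    (fun y => hasDerivAt_d2 (hw₂.differentiable one_ne_zero (x, y)))
    ((continuous_d2 hw₂).comp (continuous_const.prodMk continuous_id)) (h0 x)
  simpa only [eq_neg_of_add_eq_zero_right (hdiv _), neg_sq] using hslice

/-- estimate (3.9) of the paper:
`|∫_Ω ((w·∇)θ) ξ| ≤ (κ/20)‖∇ξ‖² + (5/κ)‖θ‖_∞² (‖w₁‖² + ‖∇w₁‖²)`. -/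
theorem nonlinear_term_estimate (L : ℝ) (hL : 0 < L) (κ : ℝ) (hκ : 0 < κ)
    (w₁ w₂ θ ξ : ℝ × ℝ → ℝ)
    (hw₁ : ContDiff ℝ (⊤ : ℕ∞) w₁) (hw₂ : ContDiff ℝ (⊤ : ℕ∞) w₂)
    (hθ : ContDiff ℝ (⊤ : ℕ∞) θ) (hξ : ContDiff ℝ (⊤ : ℕ∞) ξ)
    (hpw₁ : OmgPeriodic L w₁) (hpw₂ : OmgPeriodic L w₂)
    (hpθ : OmgPeriodic L θ) (hpξ : OmgPeriodic L ξ)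
    (hdiv : DivFree w₁ w₂) (hsym : Symm w₁ w₂) :
    |∫ p in Omg L, (w₁ p * d1 θ p + w₂ p * d2 θ p) * ξ p| ≤
      κ / 20 * gradNrmSq L ξ
        + 5 / κ * (sSup ((fun p : ℝ × ℝ => |θ p|) '' Omg L)) ^ 2
            * (nrmSq L w₁ + gradNrmSq L w₁) := by
  have hC1 : ∀ {f : ℝ × ℝ → ℝ}, ContDiff ℝ (⊤ : ℕ∞) f → ContDiff ℝ 1 f :=
    fun hf => hf.of_le (by exact_mod_cast le_top)
  have hw₂_axis : ∀ x, w₂ (x, 0) = 0 := fun x => self_eq_neg.mp (by simpa using hsym.2 x 0)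
  have hnrm_w₂ : nrmSq L w₂ ≤ gradNrmSq L w₁ :=
    (nrmSq_le_nrmSq_d1_of_divFree (hC1 hw₁) (hC1 hw₂) hdiv hw₂_axis).trans
      (nrmSq_d1_le_gradNrmSq (hC1 hw₁))
  change |∫ p in Omg L, advection w₁ w₂ θ p * ξ p| ≤ _
  rw [integral_advection_mul_eq_neg hL.le (hC1 hw₁) (hC1 hw₂) (hC1 hθ) (hC1 hξ)
    hpw₁ hpw₂ hpθ hpξ hdiv, abs_neg]
  refine (abs_integral_advection_mul_le hκ hw₁.continuous hw₂.continuous hθ.continuous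
    (hC1 hξ)).trans ?_
  gcongr
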